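/- Let A ∈ ℝ^{m×n}, let Q ∈ ℝ^{m×s} have orthonormal columns, let Ψ ∈ ℝ^{d×m} be such that ΨQ has full column rank, and set B = (ΨQ)†ΨA. Suppose Ũ ∈ ℝ^{s×r} has orthonormal columns and Σ ∈ ℝ^{r×r}, V ∈ ℝ^{n×r} satisfy ŨᵀB = ΣVᵀ (as holds when ŨΣVᵀ is a rank-r truncated SVD of B), and set U = QŨ. Then A − UΣVᵀ = (A − UUᵀA) + UŨᵀ(QᵀA − (ΨQ)†ΨA); in particular, for every p ∈ [1,∞], ‖A − UΣVᵀ‖_p = ‖(A − UUᵀA) + UŨᵀ(QᵀA − (ΨQ)†ΨA)‖_p. -/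

import Mathlib

open MeasureTheory ProbabilityTheory Matrix
open scoped ENNReal

noncomputable section

namespace RSVD

instance (m n : ℕ) : MeasurableSpace (Matrix (Fin m) (Fin n) ℝ) :=
  inferInstanceAs (MeasurableSpace (Fin m → Fin n → ℝ))

/-- The law of an `m × n` random matrix with i.i.d. standard normal entries. -/
def stdGaussian (m n : ℕ) : Measure (Matrix (Fin m) (Fin n) ℝ) :=
  Measure.pi fun _ : Fin m => Measure.pi fun _ : Fin n => gaussianReal 0 1

/-- The Frobenius norm of a real matrix. -/
def frobNorm {m n : ℕ} (M : Matrix (Fin m) (Fin n) ℝ) : ℝ :=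
  Real.sqrt (∑ i, ∑ j, M i j ^ 2)

/-- The `i`-th largest singular value of `M` (indexing is 1-based); `0` out of range. -/
def singularValue {m n : ℕ} (M : Matrix (Fin m) (Fin n) ℝ) (i : ℕ) : ℝ :=
  if h : 1 ≤ i ∧ i ≤ n then
    Real.sqrt
      (((show (Mᵀ * M).IsHermitian by simpa using Matrix.isHermitian_conjTranspose_mul_self M).eigenvalues ∘
          Tuple.sort (show (Mᵀ * M).IsHermitian by simpa using Matrix.isHermitian_conjTranspose_mul_self M).eigenvalues)
        (Fin.rev ⟨i - 1, by omega⟩))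
  else 0

/-- The spectral norm (largest singular value). -/
def specNorm {m n : ℕ} (M : Matrix (Fin m) (Fin n) ℝ) : ℝ :=
  singularValue M 1

/-- The tail energy `τ_k(M) = (∑_{i ≥ k} σ_i(M)²)^{1/2}`. -/
def tailEnergy {m n : ℕ} (M : Matrix (Fin m) (Fin n) ℝ) (k : ℕ) : ℝ :=
  Real.sqrt (∑ i ∈ Finset.Icc k n, singularValue M i ^ 2)

/-- The Schatten-`p` norm, with `p = ∞` giving the spectral norm. -/
def schattenNorm {m n : ℕ} (M : Matrix (Fin m) (Fin n) ℝ) (p : ℝ≥0∞) : ℝ :=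
  if p = ∞ then specNorm M
  else (∑ i ∈ Finset.Icc 1 n, singularValue M i ^ p.toReal) ^ (1 / p.toReal)

/-- Moore–Penrose pseudoinverse of a full-row-rank matrix: `G† = Gᵀ (G Gᵀ)⁻¹`. -/
def pinvRow {a b : ℕ} (G : Matrix (Fin a) (Fin b) ℝ) : Matrix (Fin b) (Fin a) ℝ :=
  Gᵀ * (G * Gᵀ)⁻¹

/-- Moore–Penrose pseudoinverse of a full-column-rank matrix: `G† = (Gᵀ G)⁻¹ Gᵀ`. -/
def pinvCol {a b : ℕ} (G : Matrix (Fin a) (Fin b) ℝ) : Matrix (Fin b) (Fin a) ℝ :=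
  (Gᵀ * G)⁻¹ * Gᵀ

/-- The column space of a matrix, as a subspace of Euclidean space. -/
def colSpace {m k : ℕ} (M : Matrix (Fin m) (Fin k) ℝ) :
    Submodule ℝ (EuclideanSpace ℝ (Fin m)) :=
  LinearMap.range (Matrix.toEuclideanLin M)

/-- The matrix of the orthogonal projection onto the column space of `M`. -/
def projCol {m k : ℕ} (M : Matrix (Fin m) (Fin k) ℝ) : Matrix (Fin m) (Fin m) ℝ :=
  Matrix.toEuclideanLin.symm
    (((colSpace M).subtypeL.comp ((colSpace M).orthogonalProjectionOnto)).toLinearMap)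

theorem sub_mul_mul_transpose_eq_add {R l m o n q : Type*} [CommRing R] [Fintype l]
    [Fintype m] [Fintype o] [Fintype q] (A : Matrix l n R) (Q : Matrix l m R) (W : Matrix m o R)
    (B : Matrix m n R) (S : Matrix o q R) (V : Matrix n q R) (h : Wᵀ * B = S * Vᵀ) :
    A - Q * W * S * Vᵀ = (A - Q * W * (Q * W)ᵀ * A) + Q * W * Wᵀ * (Qᵀ * A - B) := by
  have hB : Q * W * Wᵀ * B = Q * W * S * Vᵀ := by
    rw [Matrix.mul_assoc (Q * W), h, ← Matrix.mul_assoc]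
  have hA : Q * W * Wᵀ * (Qᵀ * A) = Q * W * (Q * W)ᵀ * A := by
    simp only [Matrix.transpose_mul, Matrix.mul_assoc]
  rw [Matrix.mul_sub, hA, hB]
  abel

theorem statement16_general {m n s d r : ℕ} (A : Matrix (Fin m) (Fin n) ℝ)
    (Q : Matrix (Fin m) (Fin s) ℝ)
    (Ψ : Matrix (Fin d) (Fin m) ℝ)
    (Ut : Matrix (Fin s) (Fin r) ℝ)
    (Sig : Matrix (Fin r) (Fin r) ℝ) (V : Matrix (Fin n) (Fin r) ℝ)
    (hSVD : Utᵀ * (pinvCol (Ψ * Q) * (Ψ * A)) = Sig * Vᵀ) :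
    A - (Q * Ut) * Sig * Vᵀ
        = (A - (Q * Ut) * (Q * Ut)ᵀ * A)
          + (Q * Ut) * Utᵀ * (Qᵀ * A - pinvCol (Ψ * Q) * (Ψ * A)) ∧
    ∀ p : ℝ≥0∞, 1 ≤ p →
      schattenNorm (A - (Q * Ut) * Sig * Vᵀ) p
        = schattenNorm ((A - (Q * Ut) * (Q * Ut)ᵀ * A)
            + (Q * Ut) * Utᵀ * (Qᵀ * A - pinvCol (Ψ * Q) * (Ψ * A))) p := by
  have h := sub_mul_mul_transpose_eq_add A Q Ut _ Sig V hSVD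
  exact ⟨h, fun p _ => by rw [h]⟩

/-- decomposition of the oblique projection error for the rank-`r`
truncated approximation. -/
theorem statement16 {m n s d r : ℕ} (A : Matrix (Fin m) (Fin n) ℝ)
    (Q : Matrix (Fin m) (Fin s) ℝ) (hQ : Qᵀ * Q = 1)
    (Ψ : Matrix (Fin d) (Fin m) ℝ) (hrank : (Ψ * Q).rank = s)
    (Ut : Matrix (Fin s) (Fin r) ℝ) (hUt : Utᵀ * Ut = 1)
    (Sig : Matrix (Fin r) (Fin r) ℝ) (V : Matrix (Fin n) (Fin r) ℝ)
    (hSVD : Utᵀ * (pinvCol (Ψ * Q) * (Ψ * A)) = Sig * Vᵀ) :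
    A - (Q * Ut) * Sig * Vᵀ
        = (A - (Q * Ut) * (Q * Ut)ᵀ * A)
          + (Q * Ut) * Utᵀ * (Qᵀ * A - pinvCol (Ψ * Q) * (Ψ * A)) ∧
    ∀ p : ℝ≥0∞, 1 ≤ p →
      schattenNorm (A - (Q * Ut) * Sig * Vᵀ) p
        = schattenNorm ((A - (Q * Ut) * (Q * Ut)ᵀ * A)
            + (Q * Ut) * Utᵀ * (Qᵀ * A - pinvCol (Ψ * Q) * (Ψ * A))) p :=
  statement16_general A Q Ψ Ut Sig V hSVD

end RSVD
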